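/- arXiv:2506.18058 — 7 statements merged into one kernel-verified Lean document; each statement's English description precedes it below -/
import Mathlib

section
/- Let m_x, m_y ≥ 1, Δx, Δy > 0, let M be the Dirichlet Kronecker-sum Laplacian of sizes (m_x, m_y) and steps (Δx, Δy), let α > 0, β > 0, and set P = β·I − α·M. Let N be any (m_x·m_y)×(m_x·m_y) real matrix with ‖N‖₁ ≤ 4·(1/Δx² + 1/Δy²) and ‖N‖_∞ ≤ 4·(1/Δx² + 1/Δy²). Then the spectral radius of Σ = −α·P⁻¹·N satisfies ρ(Σ) < (4α/β)·(1/Δx² + 1/Δy²). -/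
open Matrix Kronecker

noncomputable def dirLap (m : ℕ) (Δ : ℝ) : Matrix (Fin m) (Fin m) ℝ :=
  Matrix.of fun i j =>
    if i = j then -2 / Δ ^ 2
    else if (i : ℕ) + 1 = (j : ℕ) ∨ (j : ℕ) + 1 = (i : ℕ) then 1 / Δ ^ 2
    else 0

noncomputable def neuLap (m : ℕ) (Δ : ℝ) : Matrix (Fin m) (Fin m) ℝ :=
  Matrix.of fun i j =>
    if i = j then -2 / Δ ^ 2
    else if ((i : ℕ) = 0 ∧ (j : ℕ) = 1) ∨ ((i : ℕ) = m - 1 ∧ (j : ℕ) = m - 2) then 2 / Δ ^ 2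
    else if (i : ℕ) + 1 = (j : ℕ) ∨ (j : ℕ) + 1 = (i : ℕ) then 1 / Δ ^ 2
    else 0

noncomputable def kronLapD (mx my : ℕ) (Δx Δy : ℝ) :
    Matrix (Fin my × Fin mx) (Fin my × Fin mx) ℝ :=
  (1 : Matrix (Fin my) (Fin my) ℝ) ⊗ₖ dirLap mx Δx +
    dirLap my Δy ⊗ₖ (1 : Matrix (Fin mx) (Fin mx) ℝ)

noncomputable def kronLapN (mx my : ℕ) (Δx Δy : ℝ) :
    Matrix (Fin my × Fin mx) (Fin my × Fin mx) ℝ :=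
  (1 : Matrix (Fin my) (Fin my) ℝ) ⊗ₖ neuLap mx Δx +
    neuLap my Δy ⊗ₖ (1 : Matrix (Fin mx) (Fin mx) ℝ)

noncomputable def specRad {n : Type*} [Fintype n] [DecidableEq n] (A : Matrix n n ℝ) : ℝ :=
  sSup ((fun z : ℂ => ‖z‖) '' spectrum ℂ (A.map Complex.ofReal))

noncomputable def specRadC {n : Type*} [Fintype n] [DecidableEq n] (A : Matrix n n ℂ) : ℝ :=
  sSup ((fun z : ℂ => ‖z‖) '' spectrum ℂ A)

noncomputable def norm1 {n : Type*} [Fintype n] (A : Matrix n n ℝ) : ℝ :=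
  ⨆ j, ∑ i, |A i j|

noncomputable def normInf {n : Type*} [Fintype n] (A : Matrix n n ℝ) : ℝ :=
  ⨆ i, ∑ j, |A i j|

noncomputable def norm2 {n : Type*} [Fintype n] [DecidableEq n] (A : Matrix n n ℝ) : ℝ :=
  ‖Matrix.toEuclideanCLM (𝕜 := ℝ) A‖

/-! The Dirichlet Laplacian factors as `-Δ⁻² DᴴD` with `D` the injective difference matrix, so
`-M` is positive definite, also after complexification, and hence `β ‖v‖ < ‖P v‖` for `v ≠ 0`.
An eigenvector `v` of `Σ` for `μ` satisfies `μ P v = -α N v`, and the Schur test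
`‖N‖₂ ≤ √(‖N‖₁ ‖N‖_∞)` bounds `‖N v‖`; together, `|μ| β ‖v‖ < α K ‖v‖` where `K` is the common
bound on `‖N‖₁` and `‖N‖_∞`. -/

open Matrix Kronecker WithLp Finset
open scoped ComplexOrder

variable {𝕜 : Type*} [RCLike 𝕜]

section Schur

variable {m n : Type*} [Fintype n]

theorem Matrix.sq_norm_mulVec_apply_le (N : Matrix m n 𝕜) (v : n → 𝕜) (i : m) :
    ‖(N *ᵥ v) i‖ ^ 2 ≤ (∑ j, ‖N i j‖) * ∑ j, ‖N i j‖ * ‖v j‖ ^ 2 := by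
  have htri : ‖(N *ᵥ v) i‖ ≤ ∑ j, ‖N i j‖ * ‖v j‖ :=
    (norm_sum_le _ _).trans_eq (by simp_rw [norm_mul])
  calc ‖(N *ᵥ v) i‖ ^ 2 ≤ (∑ j, ‖N i j‖ * ‖v j‖) ^ 2 := by gcongr
    _ ≤ _ := sum_sq_le_sum_mul_sum_of_sq_le_mul _ (fun _ _ => norm_nonneg _)
        (fun _ _ => by positivity) (fun _ _ => le_of_eq (by ring))

theorem Matrix.norm_toLp_mulVec_le_sqrt_mul [Fintype m] (N : Matrix m n 𝕜) {C R : ℝ} (hR : 0 ≤ R)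
    (hcol : ∀ j, ∑ i, ‖N i j‖ ≤ C) (hrow : ∀ i, ∑ j, ‖N i j‖ ≤ R) (v : n → 𝕜) :
    ‖toLp 2 (N *ᵥ v)‖ ≤ √(C * R) * ‖toLp 2 v‖ := by
  have hsq : ‖toLp 2 (N *ᵥ v)‖ ^ 2 ≤ C * R * ‖toLp 2 v‖ ^ 2 := by
    simp only [EuclideanSpace.norm_sq_eq]
    calc ∑ i, ‖(N *ᵥ v) i‖ ^ 2 ≤ ∑ i, (∑ j, ‖N i j‖) * ∑ j, ‖N i j‖ * ‖v j‖ ^ 2 :=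
          sum_le_sum fun i _ => N.sq_norm_mulVec_apply_le v i
      _ ≤ ∑ i, R * ∑ j, ‖N i j‖ * ‖v j‖ ^ 2 := by gcongr with i; exact hrow i
      _ = R * ∑ j, (∑ i, ‖N i j‖) * ‖v j‖ ^ 2 := by
          rw [← mul_sum, sum_comm]; simp_rw [sum_mul]
      _ ≤ R * ∑ j, C * ‖v j‖ ^ 2 := by gcongr with j; exact hcol j
      _ = C * R * ∑ j, ‖v j‖ ^ 2 := by rw [← mul_sum]; ring
  calc ‖toLp 2 (N *ᵥ v)‖ = √(‖toLp 2 (N *ᵥ v)‖ ^ 2) := (Real.sqrt_sq (norm_nonneg _)).symm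
    _ ≤ √(C * R * ‖toLp 2 v‖ ^ 2) := Real.sqrt_le_sqrt hsq
    _ = √(C * R) * ‖toLp 2 v‖ := by
        rw [Real.sqrt_mul' _ (by positivity), Real.sqrt_sq (norm_nonneg _)]

end Schur

section Spectrum

variable {n : Type*} [Fintype n]

theorem star_dotProduct_eq_inner (v w : n → 𝕜) :
    star v ⬝ᵥ w = inner 𝕜 (toLp 2 v) (toLp 2 w) := by
  rw [EuclideanSpace.inner_toLp_toLp, dotProduct_comm]

theorem Matrix.PosDef.mul_norm_lt_norm_mulVec [DecidableEq n] {A : Matrix n n 𝕜} {c : ℝ}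
    (hA : (A - c • 1).PosDef) {v : n → 𝕜} (hv : v ≠ 0) :
    c * ‖toLp 2 v‖ < ‖toLp 2 (A *ᵥ v)‖ := by
  have hpos := hA.re_dotProduct_pos hv
  have hnorm : 0 < ‖toLp 2 v‖ := by simpa using hv
  have hcs : RCLike.re (star v ⬝ᵥ (A *ᵥ v)) ≤ ‖toLp 2 v‖ * ‖toLp 2 (A *ᵥ v)‖ := by
    rw [star_dotProduct_eq_inner]
    exact re_inner_le_norm _ _
  have hsq : RCLike.re (star v ⬝ᵥ v) = ‖toLp 2 v‖ ^ 2 := by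
    rw [star_dotProduct_eq_inner, inner_self_eq_norm_sq]
  rw [sub_mulVec, dotProduct_sub, map_sub, smul_mulVec, one_mulVec, dotProduct_smul,
    RCLike.smul_re, hsq] at hpos
  nlinarith

theorem norm_mul_lt_of_mem_spectrum [DecidableEq n] {P S N : Matrix n n 𝕜} {β K : ℝ}
    (hP : (P - β • 1).PosDef) (hPS : P * S = N) (hK : 0 < K)
    (hN : ∀ v, ‖toLp 2 (N *ᵥ v)‖ ≤ K * ‖toLp 2 v‖) {μ : 𝕜} (hμ : μ ∈ spectrum 𝕜 S) :
    ‖μ‖ * β < K := by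
  rcases eq_or_ne μ 0 with rfl | hμ0
  · simpa using hK
  rw [← Matrix.spectrum_toLin', ← Module.End.hasEigenvalue_iff_mem_spectrum] at hμ
  obtain ⟨v, hv⟩ := hμ.exists_hasEigenvector
  have hSv : S *ᵥ v = μ • v := by simpa using hv.apply_eq_smul
  have hv0 : 0 < ‖toLp 2 v‖ := by simpa using hv.2
  refine lt_of_mul_lt_mul_right ?_ hv0.le
  calc ‖μ‖ * β * ‖toLp 2 v‖ = ‖μ‖ * (β * ‖toLp 2 v‖) := by ring
    _ < ‖μ‖ * ‖toLp 2 (P *ᵥ v)‖ := by gcongr; exact hP.mul_norm_lt_norm_mulVec hv.2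
    _ = ‖toLp 2 (N *ᵥ v)‖ := by
        rw [← hPS, ← mulVec_mulVec, hSv, mulVec_smul, toLp_smul, norm_smul]
    _ ≤ K * ‖toLp 2 v‖ := hN v

theorem specRad_lt_of_forall_norm_lt [DecidableEq n] {A : Matrix n n ℝ} {r : ℝ} (hr : 0 < r)
    (h : ∀ μ ∈ spectrum ℂ (A.map Complex.ofReal), ‖μ‖ < r) : specRad A < r := by
  rcases (spectrum ℂ (A.map Complex.ofReal)).eq_empty_or_nonempty with he | hne
  · simpa [specRad, he] using hr
  · exact ((Matrix.finite_spectrum _).image _).csSup_lt_iff (hne.image _) |>.mpr (by simpa using h)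

theorem sum_abs_le_norm1 (A : Matrix n n ℝ) (j : n) : ∑ i, |A i j| ≤ norm1 A :=
  le_ciSup (f := fun j => ∑ i, |A i j|) (Set.finite_range _).bddAbove j

theorem sum_abs_le_normInf (A : Matrix n n ℝ) (i : n) : ∑ j, |A i j| ≤ normInf A :=
  le_ciSup (f := fun i => ∑ j, |A i j|) (Set.finite_range _).bddAbove i

theorem norm_toLp_map_mulVec_le {N : Matrix n n ℝ} {K : ℝ} (h1 : norm1 N ≤ K)
    (hinf : normInf N ≤ K) (v : n → 𝕜) :
    ‖toLp 2 (N.map (algebraMap ℝ 𝕜) *ᵥ v)‖ ≤ K * ‖toLp 2 v‖ := by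
  have hK : 0 ≤ K := (Real.iSup_nonneg fun _ => sum_nonneg fun _ _ => abs_nonneg _).trans h1
  have hentry (i j : n) : ‖N.map (algebraMap ℝ 𝕜) i j‖ = |N i j| := by simp
  have := norm_toLp_mulVec_le_sqrt_mul (N.map (algebraMap ℝ 𝕜)) hK
    (fun j => by simpa only [hentry] using (sum_abs_le_norm1 N j).trans h1)
    (fun i => by simpa only [hentry] using (sum_abs_le_normInf N i).trans hinf) v
  rwa [Real.sqrt_mul_self hK] at this

theorem posDef_map_smul_one_sub_smul_sub_smul_one [DecidableEq n] {M : Matrix n n ℝ}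
    (hM : (-(M.map (algebraMap ℝ 𝕜))).PosDef) {α : ℝ} (hα : 0 < α) (β : ℝ) :
    ((β • 1 - α • M).map (algebraMap ℝ 𝕜) - β • 1).PosDef := by
  have hmap : (β • 1 - α • M).map (algebraMap ℝ 𝕜) = β • 1 - α • M.map (algebraMap ℝ 𝕜) := by
    simp [Matrix.map_sub, Algebra.smul_def]
  rw [hmap, sub_sub_cancel_left, ← smul_neg]
  exact hM.smul hα

end Spectrum

section Laplacian

/-- `(finDiff R m *ᵥ v) i = v i - v (i - 1)`, reading `v (-1) = v m = 0`. -/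
def finDiff (R : Type*) [Ring R] (m : ℕ) : Matrix (Fin (m + 1)) (Fin m) R :=
  (1 : Matrix (Fin (m + 1)) (Fin (m + 1)) R).submatrix id Fin.castSucc -
    (1 : Matrix (Fin (m + 1)) (Fin (m + 1)) R).submatrix id Fin.succ

theorem finDiff_mulVec_castSucc {R : Type*} [Ring R] {m : ℕ} (v : Fin m → R) (k : ℕ)
    (hk : k < m) :
    (finDiff R m *ᵥ v) (Fin.castSucc ⟨k, hk⟩) =
      v ⟨k, hk⟩ - if h : k = 0 then 0 else v ⟨k - 1, by omega⟩ := by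
  have hA : ∀ x : Fin m, Fin.castSucc ⟨k, hk⟩ = x.castSucc ↔ x = ⟨k, hk⟩ := fun x => by
    simp [Fin.ext_iff, eq_comm]
  have hB : ∀ x : Fin m, Fin.castSucc ⟨k, hk⟩ = x.succ ↔ k ≠ 0 ∧ x = ⟨k - 1, by omega⟩ :=
    fun x => by simp [Fin.ext_iff]; omega
  rw [finDiff, sub_mulVec, Pi.sub_apply]
  simp only [mulVec, dotProduct, submatrix_apply, id_eq, one_apply, ite_mul, one_mul, zero_mul,
    hA, hB]
  split_ifs with h <;> simp [h]

theorem finDiff_mulVec_injective (R : Type*) [CommRing R] (m : ℕ) :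
    Function.Injective (finDiff R m).mulVec := by
  refine (injective_iff_map_eq_zero (finDiff R m).mulVecLin).mpr fun v hv => ?_
  have hzero : ∀ k (hk : k < m), v ⟨k, hk⟩ = 0 := by
    intro k
    induction k with
    | zero =>
      intro hk
      have h0 := congrFun hv (Fin.castSucc ⟨0, hk⟩)
      rw [mulVecLin_apply, finDiff_mulVec_castSucc] at h0
      simpa using h0
    | succ k ih =>
      intro hk
      have hk1 := congrFun hv (Fin.castSucc ⟨k + 1, hk⟩)
      rw [mulVecLin_apply, finDiff_mulVec_castSucc] at hk1
      simpa [ih (by omega)] using hk1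
  funext j
  exact hzero j j.2

theorem dirLap_map_eq_finDiff (m : ℕ) (Δ : ℝ) :
    (dirLap m Δ).map (algebraMap ℝ 𝕜) = -(Δ ^ 2)⁻¹ • ((finDiff 𝕜 m)ᴴ * finDiff 𝕜 m) := by
  ext i j
  simp [finDiff, dirLap, mul_apply, one_apply, mul_sub, sum_sub_distrib,
    RCLike.real_smul_eq_coe_mul]
  simp only [Fin.ext_iff, Fin.val_succ, Fin.val_castSucc]
  split_ifs <;> first | omega | (push_cast; ring)

theorem posDef_neg_dirLap_map (m : ℕ) {Δ : ℝ} (hΔ : Δ ≠ 0) :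
    (-(dirLap m Δ).map (algebraMap ℝ 𝕜)).PosDef := by
  rw [dirLap_map_eq_finDiff, neg_smul, neg_neg]
  exact (PosDef.conjTranspose_mul_self _ (finDiff_mulVec_injective 𝕜 m)).smul (by positivity)

theorem neg_kronLapD_map (mx my : ℕ) (Δx Δy : ℝ) :
    -(kronLapD mx my Δx Δy).map (algebraMap ℝ 𝕜) =
      (1 : Matrix (Fin my) (Fin my) 𝕜) ⊗ₖ (-(dirLap mx Δx).map (algebraMap ℝ 𝕜)) +
        (-(dirLap my Δy).map (algebraMap ℝ 𝕜)) ⊗ₖ (1 : Matrix (Fin mx) (Fin mx) 𝕜) := by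
  ext ⟨a, b⟩ ⟨c, d⟩
  simp only [kronLapD, Matrix.neg_apply, map_apply, Matrix.add_apply, kroneckerMap_apply,
    one_apply]
  split_ifs <;> simp [add_comm]

theorem posDef_neg_kronLapD_map (mx my : ℕ) {Δx Δy : ℝ} (hΔx : Δx ≠ 0) (hΔy : Δy ≠ 0) :
    (-(kronLapD mx my Δx Δy).map (algebraMap ℝ 𝕜)).PosDef := by
  rw [neg_kronLapD_map]
  exact (PosDef.one.kronecker (posDef_neg_dirLap_map mx hΔx)).add
    ((posDef_neg_dirLap_map my hΔy).kronecker PosDef.one)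

end Laplacian

theorem stmt4_general (mx my : ℕ)
    (Δx Δy : ℝ) (hΔx : 0 < Δx) (hΔy : 0 < Δy)
    (α β : ℝ) (hα : 0 < α) (hβ : 0 < β)
    (M P N : Matrix (Fin my × Fin mx) (Fin my × Fin mx) ℝ)
    (hM : M = kronLapD mx my Δx Δy)
    (hP : P = β • 1 - α • M)
    (hN1 : norm1 N ≤ 4 * (1 / Δx ^ 2 + 1 / Δy ^ 2))
    (hNinf : normInf N ≤ 4 * (1 / Δx ^ 2 + 1 / Δy ^ 2)) :
    specRad ((-α) • (P⁻¹ * N)) < (4 * α / β) * (1 / Δx ^ 2 + 1 / Δy ^ 2) := by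
  obtain ⟨K, hK⟩ : ∃ K, K = 4 * (1 / Δx ^ 2 + 1 / Δy ^ 2) := ⟨_, rfl⟩
  rw [← hK] at hN1 hNinf
  have hαK : 0 < α * K := by rw [hK]; positivity
  have hPβ (𝕜 : Type) [RCLike 𝕜] : (P.map (algebraMap ℝ 𝕜) - β • 1).PosDef := by
    rw [hP, hM]
    exact posDef_map_smul_one_sub_smul_sub_smul_one
      (posDef_neg_kronLapD_map mx my hΔx.ne' hΔy.ne') hα β
  have hdet : IsUnit P.det := by
    have hPpos : P.PosDef := by simpa using (hPβ ℝ).add (PosDef.one.smul hβ)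
    exact (isUnit_iff_isUnit_det _).mp hPpos.isUnit
  have hPS : P * ((-α) • (P⁻¹ * N)) = (-α) • N := by
    rw [Matrix.mul_smul, mul_nonsing_inv_cancel_left _ _ hdet]
  have hN (v : Fin my × Fin mx → ℂ) :
      ‖toLp 2 (((-α) • N).map (algebraMap ℝ ℂ) *ᵥ v)‖ ≤ α * K * ‖toLp 2 v‖ := by
    have hmap : ((-α) • N).map (algebraMap ℝ ℂ) = (-α) • N.map (algebraMap ℝ ℂ) :=
      Matrix.map_smul _ _ (fun _ => by rw [smul_eq_mul, map_mul, Algebra.smul_def]) N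
    rw [hmap, smul_mulVec, toLp_smul, norm_smul, Real.norm_of_nonpos (by linarith), neg_neg,
      mul_assoc]
    exact mul_le_mul_of_nonneg_left (norm_toLp_map_mulVec_le hN1 hNinf v) hα.le
  refine specRad_lt_of_forall_norm_lt (by positivity) fun μ hμ => ?_
  rw [← Complex.coe_algebraMap] at hμ
  have hμβ := norm_mul_lt_of_mem_spectrum (hPβ ℂ) (by rw [← Matrix.map_mul, hPS]) hαK hN hμ
  rw [hK] at hμβ
  rw [div_mul_eq_mul_div, lt_div_iff₀ hβ]
  linarith

theorem stmt4 (mx my : ℕ) (hmx : 1 ≤ mx) (hmy : 1 ≤ my)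
    (Δx Δy : ℝ) (hΔx : 0 < Δx) (hΔy : 0 < Δy)
    (α β : ℝ) (hα : 0 < α) (hβ : 0 < β)
    (M P N : Matrix (Fin my × Fin mx) (Fin my × Fin mx) ℝ)
    (hM : M = kronLapD mx my Δx Δy)
    (hP : P = β • 1 - α • M)
    (hN1 : norm1 N ≤ 4 * (1 / Δx ^ 2 + 1 / Δy ^ 2))
    (hNinf : normInf N ≤ 4 * (1 / Δx ^ 2 + 1 / Δy ^ 2)) :
    specRad ((-α) • (P⁻¹ * N)) < (4 * α / β) * (1 / Δx ^ 2 + 1 / Δy ^ 2) :=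
  stmt4_general mx my Δx Δy hΔx hΔy α β hα hβ M P N hM hP hN1 hNinf
end

section
/- Let N and T be n×n complex matrices with N·N = 0, and let β ∈ ℂ. Then the matrices β·N + T·N and T·N have the same spectrum; in particular their spectral radii coincide. -/
open Matrix Kronecker

/-!
For `r ≠ 0` one has `r - (β N + T N) = (r - T N)(1 - (β / r) N)`, and `1 - (β / r) N` is a unit
because `N` is nilpotent, so the two resolvents are invertible together. At `r = 0` neither
`(β + T) N` nor `T N` is invertible, since a right factor `N` with `N² = 0` would have to be
left invertible.
-/

theorem not_isUnit_mul_of_mul_self_eq_zero {R : Type*} [Ring R] [Nontrivial R] {N : R}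
    (hN : N * N = 0) (a : R) : ¬IsUnit (a * N) := by
  rintro ⟨u, hu⟩
  have hleft : (↑u⁻¹ * a) * N = 1 := by rw [mul_assoc, ← hu, Units.inv_mul]
  have hN0 : N = 0 := by rw [← one_mul N, ← hleft, mul_assoc, hN, mul_zero]
  simp [hN0] at hleft

section

variable {𝕜 A : Type*} [Field 𝕜] [Ring A] [Algebra 𝕜 A]

theorem algebraMap_sub_smul_add_mul_eq {N : A} (hN : N * N = 0) (β : 𝕜) (T : A) {r : 𝕜}
    (hr : r ≠ 0) :
    algebraMap 𝕜 A r - (β • N + T * N) = (algebraMap 𝕜 A r - T * N) * (1 - (β / r) • N) := by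
  have hscalar : algebraMap 𝕜 A r * ((β / r) • N) = β • N := by
    rw [Algebra.algebraMap_eq_smul_one, smul_mul_smul_comm, one_mul, mul_div_cancel₀ β hr]
  have hnil : T * N * ((β / r) • N) = 0 := by
    rw [mul_smul_comm, mul_assoc, hN, mul_zero, smul_zero]
  rw [sub_mul, mul_sub, mul_sub, mul_one, mul_one, hscalar, hnil]
  abel

theorem spectrum_smul_add_mul_eq_of_mul_self_eq_zero {N : A} (hN : N * N = 0) (β : 𝕜) (T : A) :
    spectrum 𝕜 (β • N + T * N) = spectrum 𝕜 (T * N) := by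
  rcases subsingleton_or_nontrivial A with hA | hA
  · rw [Subsingleton.elim (β • N + T * N) (T * N)]
  ext r
  rcases eq_or_ne r 0 with rfl | hr
  · have hfactor : β • N + T * N = (algebraMap 𝕜 A β + T) * N := by
      rw [add_mul, Algebra.algebraMap_eq_smul_one, smul_mul_assoc, one_mul]
    simp only [spectrum.zero_mem_iff, hfactor, not_isUnit_mul_of_mul_self_eq_zero hN,
      not_false_eq_true]
  · have hunit : IsUnit (1 - (β / r) • N) := IsNilpotent.isUnit_one_sub
      ⟨2, by rw [pow_two, smul_mul_smul_comm, hN, smul_zero]⟩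
    rw [spectrum.mem_iff, spectrum.mem_iff, algebraMap_sub_smul_add_mul_eq hN β T hr,
      hunit.mul_right_iff]

end

theorem stmt7 {n : ℕ} (N T : Matrix (Fin n) (Fin n) ℂ) (hN : N * N = 0) (β : ℂ) :
    spectrum ℂ (β • N + T * N) = spectrum ℂ (T * N) ∧
      specRadC (β • N + T * N) = specRadC (T * N) := by
  have hspec := spectrum_smul_add_mul_eq_of_mul_self_eq_zero hN β T
  exact ⟨hspec, by rw [specRadC, specRadC, hspec]⟩
end

section
/- Let M be an n×n real symmetric negative semidefinite matrix, let α > 0 and β > 0, and set P = β·I − α·M. Then P is invertible and the spectral radius of β·P⁻¹ − I equals α·ρ(M)/(β + α·ρ(M)). -/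
open Matrix Kronecker

/-!
Diagonalize `M = U diag(d) Uᵀ` with `U` orthogonal and all `dᵢ ≤ 0`. The same `U` diagonalizes
`P`, with eigenvalues `β + α|dᵢ| > 0`, and hence `β P⁻¹ - I`, with eigenvalues
`-α|dᵢ| / (β + α|dᵢ|)`. The spectral radius of an orthogonally diagonalized matrix is the largest
modulus of its diagonal entries, and `t ↦ αt / (β + αt)` is increasing on `t ≥ 0`, so both
spectral radii are attained at the same index.
-/

open Unitary

open scoped ComplexOrder in
theorem Matrix.IsHermitian.eigenvalues_nonpos {𝕜 n : Type*} [RCLike 𝕜] [Fintype n]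
    [DecidableEq n] {A : Matrix n n 𝕜} (hA : A.IsHermitian) (hneg : (-A).PosSemidef) (i : n) :
    hA.eigenvalues i ≤ 0 := by
  have := hneg.dotProduct_mulVec_nonneg (hA.eigenvectorBasis i)
  rw [hA.eigenvalues_eq i]
  simp only [neg_mulVec, dotProduct_neg] at this
  simpa using RCLike.re_le_re this

theorem specRad_conj_diagonal {n : Type*} [Fintype n] [DecidableEq n]
    (U : unitary (Matrix n n ℝ)) (E : n → ℝ) :
    specRad (conjStarAlgAut ℝ _ U (diagonal E)) = sSup (Set.range fun i => |E i|) := by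
  let f := (Complex.ofRealHom : ℝ →+* ℂ).mapMatrix (m := n)
  have f_star (A : Matrix n n ℝ) : f (star A) = star (f A) := by
    ext i j; simp [f]
  let V : unitary (Matrix n n ℂ) :=
    ⟨f U, by
      rw [Unitary.mem_iff, ← f_star, ← map_mul, ← map_mul, Unitary.star_mul_self_of_mem U.2,
        Unitary.mul_star_self_of_mem U.2, map_one]
      exact ⟨rfl, rfl⟩⟩
  have hmap : (conjStarAlgAut ℝ _ U (diagonal E)).map Complex.ofReal =
      conjStarAlgAut ℂ _ V (diagonal fun i => (E i : ℂ)) := by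
    change f (U * diagonal E * star (U : Matrix n n ℝ)) = _
    rw [map_mul, map_mul, f_star, conjStarAlgAut_apply]
    simp [V, f]
  rw [specRad, hmap, conjStarAlgAut_apply, spectrum_star_right_conjugate, spectrum_diagonal,
    ← Set.range_comp]
  simp [Function.comp_def, Complex.norm_real]

theorem MonotoneOn.csSup_range_comp {ι α β : Type*} [Finite ι] [Nonempty ι]
    [ConditionallyCompleteLinearOrder α] [ConditionallyCompleteLinearOrder β]
    {f : ι → α} {g : α → β} {s : Set α} (hg : MonotoneOn g s) (hf : ∀ i, f i ∈ s) :
    sSup (Set.range (g ∘ f)) = g (sSup (Set.range f)) := by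
  obtain ⟨i₀, hi₀⟩ := Finite.exists_max f
  have hf_max : IsGreatest (Set.range f) (f i₀) := ⟨⟨i₀, rfl⟩, by rintro _ ⟨i, rfl⟩; exact hi₀ i⟩
  have hgf_max : IsGreatest (Set.range (g ∘ f)) (g (f i₀)) :=
    ⟨⟨i₀, rfl⟩, by rintro _ ⟨i, rfl⟩; exact hg (hf i) (hf i₀) (hi₀ i)⟩
  rw [hf_max.csSup_eq, hgf_max.csSup_eq]

theorem monotoneOn_mul_div_add_mul {α β : ℝ} (hα : 0 ≤ α) (hβ : 0 < β) :
    MonotoneOn (fun t => α * t / (β + α * t)) (Set.Ici 0) := by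
  intro s hs t ht hst
  have hs' : 0 ≤ α * s := mul_nonneg hα hs
  have ht' : 0 ≤ α * t := mul_nonneg hα ht
  rw [div_le_div_iff₀ (by linarith) (by linarith)]
  nlinarith [mul_le_mul_of_nonneg_left hst (mul_nonneg hα hβ.le)]

theorem abs_mul_inv_add_mul_sub_one {α β t : ℝ} (hα : 0 ≤ α) (hβ : 0 < β) (ht : 0 ≤ t) :
    |β * (β + α * t)⁻¹ - 1| = α * t / (β + α * t) := by
  rw [show β * (β + α * t)⁻¹ - 1 = -(α * t / (β + α * t)) by field_simp; ring, abs_neg,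
    abs_of_nonneg (by positivity)]

theorem stmt8 {n : ℕ} (M : Matrix (Fin n) (Fin n) ℝ)
    (hsymm : M.IsSymm) (hnsd : (-M).PosSemidef)
    (α β : ℝ) (hα : 0 < α) (hβ : 0 < β)
    (P : Matrix (Fin n) (Fin n) ℝ) (hP : P = β • 1 - α • M) :
    IsUnit P ∧ specRad (β • P⁻¹ - 1) = α * specRad M / (β + α * specRad M) := by
  have hM : M.IsHermitian := isHermitian_iff_isSymm.mpr hsymm
  set d := hM.eigenvalues
  set φ := conjStarAlgAut ℝ _ hM.eigenvectorUnitary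
  set D : Fin n → ℝ := fun i => β - α * d i
  have hD : ∀ i, D i = β + α * |d i| := fun i => by
    rw [abs_of_nonpos (hM.eigenvalues_nonpos hnsd i)]; ring
  have hM_eq : M = φ (diagonal d) := by simpa [φ] using hM.spectral_theorem
  have hP_eq : P = φ (diagonal D) := by
    rw [hP, hM_eq, ← map_one φ, ← map_smul, ← map_smul, ← map_sub]
    congr 1; ext i j; by_cases h : i = j <;> simp [h, D, one_apply]
  have hP_mul : P * φ (diagonal D⁻¹) = 1 := by
    rw [hP_eq, ← map_mul, diagonal_mul_diagonal, ← map_one φ, ← diagonal_one]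
    congr; funext i
    exact mul_inv_cancel₀ (by rw [hD i]; positivity)
  refine ⟨IsUnit.of_mul_eq_one _ hP_mul, ?_⟩
  have hQ_eq : β • P⁻¹ - 1 = φ (diagonal fun i => β * (D i)⁻¹ - 1) := by
    rw [inv_eq_right_inv hP_mul, ← map_one φ, ← map_smul, ← map_sub]
    congr 1; ext i j; by_cases h : i = j <;> simp [h, one_apply]
  have hQ_entry : ∀ i, |β * (D i)⁻¹ - 1| = α * |d i| / (β + α * |d i|) := fun i => by
    rw [hD i, abs_mul_inv_add_mul_sub_one hα.le hβ (abs_nonneg _)]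
  rw [hQ_eq, hM_eq, specRad_conj_diagonal, specRad_conj_diagonal]
  simp_rw [hQ_entry]
  rcases isEmpty_or_nonempty (Fin n) with _ | _
  · simp [Set.range_eq_empty]
  · exact (monotoneOn_mul_div_add_mul hα.le hβ).csSup_range_comp (f := fun i => |d i|)
      fun i => abs_nonneg (d i)
end

section
/- Let m_x, m_y ≥ 1, Δx, Δy > 0, let M be the Dirichlet Kronecker-sum Laplacian of sizes (m_x, m_y) and steps (Δx, Δy), let α > 0, β > 0, and set P = β·I − α·M. Let N be a real matrix of the same size with N·N = 0. Then the spectral radius of Σ = −α·P⁻¹·N satisfies ρ(Σ) ≤ α²·ρ(M)·√(‖N‖₁·‖N‖_∞) / (β² + α·β·ρ(M)). -/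
open Matrix Kronecker

/-!
Write `S = -α P⁻¹ N`. From `P P⁻¹ = 1` one gets `β P⁻¹ = 1 + α M P⁻¹`, and together with `N² = 0`
this gives `S² = S ((α/β) M) S`. Hence if `S v = z v` with `z ≠ 0`, then `M v` is an eigenvector of
`(α/β) M S = -(α²/β) (M P⁻¹) N` for the same `z`, so `|z| ≤ (α²/β) ‖M P⁻¹‖₂ ‖N‖₂`.

The Dirichlet Laplacian is negative semidefinite: each one-dimensional factor is diagonally
dominant (Gershgorin), and Kronecker products and sums preserve semidefiniteness. So `M P⁻¹` is
Hermitian with eigenvalues `μ / (β - α μ)` for eigenvalues `μ ≤ 0` of `M`, whence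
`‖M P⁻¹‖₂ ≤ ρ(M) / (β + α ρ(M))`. Finally `‖N‖₂² = ‖Nᴴ N‖₂ = ρ(Nᴴ N)` is at most the largest
absolute row sum of `Nᴴ N`, which is at most `‖N‖₁ ‖N‖_∞`.
-/

namespace Matrix

variable {n : Type*} [Fintype n] [DecidableEq n] {K : Type*} [Field K]

theorem hasEigenvalue_toLin'_iff_mem_spectrum {A : Matrix n n K} {μ : K} :
    Module.End.HasEigenvalue (toLin' A) μ ↔ μ ∈ spectrum K A := by
  rw [Module.End.hasEigenvalue_iff_mem_spectrum, spectrum_toLin']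

theorem mem_spectrum_iff_exists_mulVec {A : Matrix n n K} {μ : K} :
    μ ∈ spectrum K A ↔ ∃ v ≠ 0, A *ᵥ v = μ • v := by
  rw [← hasEigenvalue_toLin'_iff_mem_spectrum]
  constructor
  · intro h
    obtain ⟨v, hv⟩ := h.exists_hasEigenvector
    rw [Module.End.hasEigenvector_iff, Module.End.mem_eigenspace_iff, toLin'_apply] at hv
    exact ⟨v, hv.2, hv.1⟩
  · rintro ⟨v, hv0, hv⟩
    exact Module.End.hasEigenvalue_of_hasEigenvector
      (Module.End.hasEigenvector_iff.2 ⟨by rwa [Module.End.mem_eigenspace_iff, toLin'_apply], hv0⟩)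

theorem mem_spectrum_mul_of_mul_self_eq {B C : Matrix n n K} (h : B * B = B * C * B) {z : K}
    (hz : z ∈ spectrum K B) (hz0 : z ≠ 0) : z ∈ spectrum K (C * B) := by
  obtain ⟨v, hv0, hv⟩ := mem_spectrum_iff_exists_mulVec.1 hz
  have hBCv : B *ᵥ (C *ᵥ v) = z • v := by
    refine smul_right_injective _ hz0 ?_
    calc z • B *ᵥ (C *ᵥ v) = (B * C * B) *ᵥ v := by
          rw [← mulVec_mulVec, hv, mulVec_smul, mulVec_mulVec]
      _ = z • z • v := by rw [← h, ← mulVec_mulVec, hv, mulVec_smul, hv]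
  refine mem_spectrum_iff_exists_mulVec.2 ⟨C *ᵥ v, fun h0 => ?_, ?_⟩
  · rw [h0, mulVec_zero, eq_comm, smul_eq_zero] at hBCv
    exact hBCv.elim hz0 hv0
  · rw [← mulVec_mulVec, hBCv, mulVec_smul]

theorem exists_mem_spectrum_of_mem_spectrum_mul_inv {M P : Matrix n n K} {α β : K} (hβ : β ≠ 0)
    (hP : P = β • 1 - α • M) (hPu : IsUnit P) {z : K} (hz : z ∈ spectrum K (M * P⁻¹)) :
    ∃ μ ∈ spectrum K M, z * (β - α * μ) = μ := by
  obtain ⟨u, hu0, hu⟩ := mem_spectrum_iff_exists_mulVec.1 hz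
  set w := P⁻¹ *ᵥ u
  have hPw : P *ᵥ w = u := by
    rw [mulVec_mulVec, mul_nonsing_inv _ ((isUnit_iff_isUnit_det P).1 hPu), one_mulVec]
  have hw0 : w ≠ 0 := fun h => hu0 (by rw [← hPw, h, mulVec_zero])
  have hMw : (1 + z * α) • (M *ᵥ w) = (z * β) • w := by
    have hPw' : P *ᵥ w = β • w - α • (M *ᵥ w) := by
      rw [hP, sub_mulVec, smul_mulVec, smul_mulVec, one_mulVec]
    have hu' : M *ᵥ w = z • (β • w - α • (M *ᵥ w)) := by
      rw [← hPw', hPw, ← hu, ← mulVec_mulVec]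
    linear_combination (norm := module) hu'
  have hden : 1 + z * α ≠ 0 := by
    intro h0
    rw [h0, zero_smul, eq_comm, smul_eq_zero] at hMw
    rcases hMw with h | h
    · rcases mul_eq_zero.1 h with rfl | h
      · simp at h0
      · exact hβ h
    · exact hw0 h
  refine ⟨z * β / (1 + z * α), mem_spectrum_iff_exists_mulVec.2 ⟨w, hw0, ?_⟩, ?_⟩
  · rw [div_eq_inv_mul, mul_smul, ← hMw, smul_smul, inv_mul_cancel₀ hden, one_smul]
  · field_simp
    ring

theorem smul_inv_mul_mul_self_eq {M N P : Matrix n n K} {α β : K} (hβ : β ≠ 0)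
    (hP : P = β • 1 - α • M) (hPu : IsUnit P) (hN : N * N = 0) (γ : K) :
    (γ • (P⁻¹ * N)) * (γ • (P⁻¹ * N)) = (γ • (P⁻¹ * N)) * ((α / β) • M) * (γ • (P⁻¹ * N)) := by
  have hinv : β • P⁻¹ = 1 + α • (M * P⁻¹) :=
    calc β • P⁻¹ = (P + α • M) * P⁻¹ := by rw [hP, sub_add_cancel, smul_mul, one_mul]
      _ = 1 + α • (M * P⁻¹) := by
        rw [add_mul, mul_nonsing_inv _ ((isUnit_iff_isUnit_det P).1 hPu), smul_mul]
  have hβN : β • (N * (P⁻¹ * N)) = α • (N * (M * (P⁻¹ * N))) := by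
    rw [← mul_smul_comm, ← smul_mul, hinv]
    rw [add_mul, one_mul, mul_add, hN, zero_add, smul_mul, mul_smul_comm]
    simp only [Matrix.mul_assoc]
  have key : N * (P⁻¹ * N) = (α / β) • (N * (M * (P⁻¹ * N))) := by
    rw [div_eq_inv_mul, mul_smul, ← hβN, inv_smul_smul₀ hβ]
  simp only [smul_mul_assoc, mul_smul_comm, Matrix.mul_assoc, key, smul_smul]
  rw [mul_comm (α / β) γ]

theorem map_nonsing_inv {L : Type*} [Field L] (f : K →+* L) (A : Matrix n n K) :
    A⁻¹.map f = (A.map f)⁻¹ := by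
  rw [inv_def, inv_def, ← RingHom.mapMatrix_apply, ← RingHom.mapMatrix_apply,
    ← RingHom.map_adjugate, ← RingHom.map_det]
  ext i j
  simp [Ring.inverse_eq_inv']

theorem exists_norm_le_sum_norm_of_mem_spectrum {𝕜 : Type*} [NormedField 𝕜] {A : Matrix n n 𝕜}
    {z : 𝕜} (hz : z ∈ spectrum 𝕜 A) : ∃ k, ‖z‖ ≤ ∑ j, ‖A k j‖ := by
  obtain ⟨k, hk⟩ := eigenvalue_mem_ball (hasEigenvalue_toLin'_iff_mem_spectrum.2 hz)
  rw [Metric.mem_closedBall, dist_eq_norm] at hk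
  refine ⟨k, ?_⟩
  rw [← Finset.add_sum_erase _ _ (Finset.mem_univ k)]
  linarith [norm_le_norm_add_norm_sub' z (A k k)]

open scoped ComplexOrder in
theorem IsHermitian.posSemidef_of_sum_norm_le_re {𝕜 : Type*} [RCLike 𝕜] {A : Matrix n n 𝕜}
    (hA : A.IsHermitian) (h : ∀ k, ∑ j ∈ Finset.univ.erase k, ‖A k j‖ ≤ RCLike.re (A k k)) :
    A.PosSemidef := by
  refine hA.posSemidef_iff_eigenvalues_nonneg.2 fun i => ?_
  have hi : (hA.eigenvalues i : 𝕜) ∈ spectrum 𝕜 A :=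
    hA.spectrum_eq_image_range ▸ ⟨_, ⟨i, rfl⟩, rfl⟩
  obtain ⟨k, hk⟩ := eigenvalue_mem_ball (hasEigenvalue_toLin'_iff_mem_spectrum.2 hi)
  rw [Metric.mem_closedBall, dist_comm, dist_eq_norm] at hk
  have := RCLike.re_le_norm (A k k - hA.eigenvalues i)
  simp only [map_sub, RCLike.ofReal_re] at this
  simp only [Pi.zero_apply]
  linarith [h k]

end Matrix

theorem IsSelfAdjoint.norm_le_of_forall_mem_spectrum {A : Type*} [CStarAlgebra A] {a : A}
    (ha : IsSelfAdjoint a) {r : ℝ} (hr : 0 ≤ r) (h : ∀ z ∈ spectrum ℂ a, ‖z‖ ≤ r) : ‖a‖ ≤ r := by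
  have hrad : spectralRadius ℂ a ≤ ENNReal.ofReal r :=
    iSup₂_le fun z hz => by
      rw [← ENNReal.ofReal_coe_nnreal, coe_nnnorm]
      exact ENNReal.ofReal_le_ofReal (h z hz)
  rwa [ha.spectralRadius_eq_nnnorm, ← ENNReal.ofReal_coe_nnreal, coe_nnnorm,
    ENNReal.ofReal_le_ofReal_iff hr] at hrad

open scoped Matrix.Norms.L2Operator ComplexOrder

namespace Matrix

theorem posDef_smul_one_sub_smul {n : Type*} [DecidableEq n] {M : Matrix n n ℂ}
    (hM : (-M).PosSemidef) {α β : ℝ} (hα : 0 ≤ α) (hβ : 0 < β) :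
    ((β : ℂ) • 1 - (α : ℂ) • M).PosDef := by
  rw [sub_eq_add_neg, ← smul_neg]
  exact (PosDef.one.smul (Complex.zero_lt_real.2 hβ)).add_posSemidef
    (hM.smul (Complex.zero_le_real.2 hα))

variable {n : Type*} [Fintype n] [DecidableEq n]

theorem norm_le_l2_opNorm_of_mem_spectrum {A : Matrix n n ℂ} {z : ℂ} (hz : z ∈ spectrum ℂ A) :
    ‖z‖ ≤ ‖A‖ := by
  -- `spectrum.norm_le_norm_of_mem` needs `‖1‖ = 1`, which fails for the zero algebra
  cases isEmpty_or_nonempty n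
  · simp [spectrum.of_subsingleton] at hz
  · exact spectrum.norm_le_norm_of_mem hz

theorem exists_nonneg_eq_neg_of_mem_spectrum {M : Matrix n n ℂ} (hM : (-M).PosSemidef) {μ : ℂ}
    (hμ : μ ∈ spectrum ℂ M) : ∃ t : ℝ, 0 ≤ t ∧ μ = -t := by
  have h := (posSemidef_iff_isHermitian_and_spectrum_nonneg.1 hM).2
    (spectrum.neg_eq (R := ℂ) M ▸ Set.neg_mem_neg.2 hμ)
  obtain ⟨hre, him⟩ := Complex.nonpos_iff.1 (neg_nonneg.1 h)
  exact ⟨-μ.re, by linarith, Complex.ext (by simp) (by simp [him])⟩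

theorem l2_opNorm_mul_inv_le {M P : Matrix n n ℂ} (hM : (-M).PosSemidef) {ρ : ℝ} (hρ0 : 0 ≤ ρ)
    (hρ : ∀ μ ∈ spectrum ℂ M, ‖μ‖ ≤ ρ) {α β : ℝ} (hα : 0 < α) (hβ : 0 < β)
    (hP : P = (β : ℂ) • 1 - (α : ℂ) • M) : ‖M * P⁻¹‖ ≤ ρ / (β + α * ρ) := by
  have hPpd : P.PosDef := hP ▸ posDef_smul_one_sub_smul hM hα.le hβ
  have hPdet := (isUnit_iff_isUnit_det P).1 hPpd.isUnit
  have hcomm : M * P⁻¹ = P⁻¹ * M := by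
    have hPM : P * M = M * P := by
      rw [hP, sub_mul, mul_sub, smul_mul, smul_mul, mul_smul_comm, mul_smul_comm, one_mul, mul_one]
    calc M * P⁻¹ = P⁻¹ * (P * M) * P⁻¹ := by
          rw [← Matrix.mul_assoc, nonsing_inv_mul _ hPdet, one_mul]
      _ = P⁻¹ * M := by
          rw [hPM, Matrix.mul_assoc, Matrix.mul_assoc, mul_nonsing_inv _ hPdet, mul_one]
  have hsa : IsSelfAdjoint (M * P⁻¹) := by
    have hMh : M.IsHermitian := by simpa using hM.isHermitian.neg
    exact (IsSelfAdjoint.commute_iff hMh.isSelfAdjoint hPpd.isHermitian.inv.isSelfAdjoint).1 hcomm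
  refine hsa.norm_le_of_forall_mem_spectrum (by positivity) fun z hz => ?_
  obtain ⟨μ, hμ, hzμ⟩ := exists_mem_spectrum_of_mem_spectrum_mul_inv
    (Complex.ofReal_ne_zero.2 hβ.ne') hP hPpd.isUnit hz
  obtain ⟨t, ht, rfl⟩ := exists_nonneg_eq_neg_of_mem_spectrum hM hμ
  have htρ : t ≤ ρ := by simpa [abs_of_nonneg ht] using hρ _ hμ
  have hz : z = ((-t / (β + α * t) : ℝ) : ℂ) := by
    rw [Complex.ofReal_div, eq_div_iff (by exact_mod_cast (by positivity : β + α * t ≠ 0))]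
    push_cast
    linear_combination hzμ
  rw [hz, Complex.norm_real, Real.norm_eq_abs, abs_div, abs_neg, abs_of_nonneg ht,
    abs_of_pos (by positivity), div_le_div_iff₀ (by positivity) (by positivity)]
  nlinarith

theorem norm_le_of_mem_spectrum_neg_smul_inv_mul {M N P : Matrix n n ℂ} (hM : (-M).PosSemidef)
    {ρ : ℝ} (hρ0 : 0 ≤ ρ) (hρ : ∀ μ ∈ spectrum ℂ M, ‖μ‖ ≤ ρ) {α β : ℝ} (hα : 0 < α) (hβ : 0 < β)
    (hP : P = (β : ℂ) • 1 - (α : ℂ) • M) (hN : N * N = 0) {z : ℂ}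
    (hz : z ∈ spectrum ℂ (-(α : ℂ) • (P⁻¹ * N))) :
    ‖z‖ ≤ α ^ 2 * ρ * ‖N‖ / (β ^ 2 + α * β * ρ) := by
  rcases eq_or_ne z 0 with rfl | hz0
  · simpa using by positivity
  have hβ' : (β : ℂ) ≠ 0 := Complex.ofReal_ne_zero.2 hβ.ne'
  have hPu : IsUnit P := (hP ▸ posDef_smul_one_sub_smul hM hα.le hβ).isUnit
  have hz' := mem_spectrum_mul_of_mul_self_eq
    (smul_inv_mul_mul_self_eq hβ' hP hPu hN _) hz hz0
  have hCS : ((α : ℂ) / β) • M * (-(α : ℂ) • (P⁻¹ * N)) =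
      ((-(α ^ 2 / β) : ℝ) : ℂ) • (M * P⁻¹ * N) := by
    rw [smul_mul_smul, Matrix.mul_assoc]
    congr 1
    push_cast
    ring
  rw [hCS] at hz'
  calc ‖z‖ ≤ α ^ 2 / β * (‖M * P⁻¹‖ * ‖N‖) := by
        refine (norm_le_l2_opNorm_of_mem_spectrum hz').trans ?_
        rw [norm_smul, Complex.norm_real, Real.norm_eq_abs, abs_neg, abs_of_pos (by positivity)]
        gcongr
        exact l2_opNorm_mul _ _
    _ ≤ α ^ 2 / β * (ρ / (β + α * ρ) * ‖N‖) := by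
        gcongr
        exact l2_opNorm_mul_inv_le hM hρ0 hρ hα hβ hP
    _ = α ^ 2 * ρ * ‖N‖ / (β ^ 2 + α * β * ρ) := by
        field_simp

end Matrix

variable {n : Type*} [Fintype n] [DecidableEq n]

theorem l2_opNorm_map_ofReal_le_sqrt_norm1_mul_normInf (N : Matrix n n ℝ) :
    ‖N.map Complex.ofReal‖ ≤ √(norm1 N * normInf N) := by
  have h1 : 0 ≤ norm1 N := Real.iSup_nonneg fun j => Finset.sum_nonneg fun i _ => abs_nonneg _
  have hinf : 0 ≤ normInf N := Real.iSup_nonneg fun i => Finset.sum_nonneg fun j _ => abs_nonneg _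
  set A := N.map Complex.ofReal
  have hA : ‖star A * A‖ ≤ norm1 N * normInf N := by
    refine (IsSelfAdjoint.star_mul_self A).norm_le_of_forall_mem_spectrum (by positivity)
      fun z hz => ?_
    obtain ⟨i, hi⟩ := exists_norm_le_sum_norm_of_mem_spectrum hz
    refine hi.trans ?_
    calc ∑ j, ‖(star A * A) i j‖ ≤ ∑ j, ∑ k, |N k i| * |N k j| := by
          gcongr with j
          rw [star_eq_conjTranspose, mul_apply]
          refine (norm_sum_le _ _).trans (le_of_eq ?_)
          simp [A]
      _ = ∑ k, |N k i| * ∑ j, |N k j| := by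
          rw [Finset.sum_comm]
          simp only [Finset.mul_sum]
      _ ≤ ∑ k, |N k i| * normInf N := by
          gcongr with k
          exact le_ciSup (f := fun k => ∑ j, |N k j|) (Set.finite_range _).bddAbove k
      _ = (∑ k, |N k i|) * normInf N := (Finset.sum_mul ..).symm
      _ ≤ norm1 N * normInf N := by
          gcongr
          exact le_ciSup (f := fun i => ∑ k, |N k i|) (Set.finite_range _).bddAbove i
  rw [CStarRing.norm_star_mul_self] at hA
  exact Real.le_sqrt_of_sq_le (by rw [sq]; exact hA)

theorem specRad_nonneg (A : Matrix n n ℝ) : 0 ≤ specRad A :=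
  Real.sSup_nonneg (by rintro _ ⟨z, -, rfl⟩; exact norm_nonneg z)

theorem norm_le_specRad {A : Matrix n n ℝ} {z : ℂ} (hz : z ∈ spectrum ℂ (A.map Complex.ofReal)) :
    ‖z‖ ≤ specRad A :=
  le_csSup ((Matrix.finite_spectrum _).image _).bddAbove ⟨z, hz, rfl⟩

theorem specRad_le {A : Matrix n n ℝ} {r : ℝ} (hr : 0 ≤ r)
    (h : ∀ z ∈ spectrum ℂ (A.map Complex.ofReal), ‖z‖ ≤ r) : specRad A ≤ r :=
  Real.sSup_le (by rintro _ ⟨z, hz, rfl⟩; exact h z hz) hr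

theorem map_ofReal_smul_inv_mul (c : ℝ) (P N : Matrix n n ℝ) :
    (c • (P⁻¹ * N)).map Complex.ofReal =
      (c : ℂ) • ((P.map Complex.ofReal)⁻¹ * N.map Complex.ofReal) := by
  have hmul : (P⁻¹ * N).map Complex.ofReal = P⁻¹.map Complex.ofReal * N.map Complex.ofReal :=
    Matrix.map_mul (f := Complex.ofRealHom)
  have hinv : P⁻¹.map Complex.ofReal = (P.map Complex.ofReal)⁻¹ :=
    map_nonsing_inv Complex.ofRealHom P
  rw [← hinv, ← hmul]
  ext i j
  simp

theorem specRad_neg_smul_inv_mul_le {M P N : Matrix n n ℝ} (hM : (-M.map Complex.ofReal).PosSemidef)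
    {α β : ℝ} (hα : 0 < α) (hβ : 0 < β) (hP : P = β • 1 - α • M) (hN : N * N = 0) :
    specRad ((-α) • (P⁻¹ * N)) ≤
      α ^ 2 * specRad M * √(norm1 N * normInf N) / (β ^ 2 + α * β * specRad M) := by
  have hρ := specRad_nonneg M
  have hPc : P.map Complex.ofReal = (β : ℂ) • 1 - (α : ℂ) • M.map Complex.ofReal := by
    subst hP
    ext i j
    simp only [map_apply, Matrix.sub_apply, Matrix.smul_apply, one_apply, smul_eq_mul]
    split_ifs <;> push_cast <;> ring
  have hNc : N.map Complex.ofReal * N.map Complex.ofReal = 0 := by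
    have hmul : (N * N).map Complex.ofReal = N.map Complex.ofReal * N.map Complex.ofReal :=
      Matrix.map_mul (f := Complex.ofRealHom)
    rw [← hmul, hN, Matrix.map_zero _ Complex.ofReal_zero]
  refine specRad_le (by positivity) fun z hz => ?_
  rw [map_ofReal_smul_inv_mul, Complex.ofReal_neg] at hz
  calc ‖z‖ ≤ α ^ 2 * specRad M * ‖N.map Complex.ofReal‖ / (β ^ 2 + α * β * specRad M) :=
        norm_le_of_mem_spectrum_neg_smul_inv_mul hM hρ (fun μ hμ => norm_le_specRad hμ) hα hβ
          hPc hNc hz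
    _ ≤ α ^ 2 * specRad M * √(norm1 N * normInf N) / (β ^ 2 + α * β * specRad M) := by
        gcongr
        exact l2_opNorm_map_ofReal_le_sqrt_norm1_mul_normInf N

open Finset in
theorem card_filter_adjacent_le_two {m : ℕ} (k : Fin m) :
    #{j : Fin m | (k : ℕ) + 1 = j ∨ (j : ℕ) + 1 = k} ≤ 2 :=
  calc #{j : Fin m | (k : ℕ) + 1 = j ∨ (j : ℕ) + 1 = k} ≤ #{(k : ℕ) + 1, (k : ℕ) - 1} :=
        card_le_card_of_injOn (fun j => (j : ℕ)) (fun j hj => by simp at hj ⊢; omega)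
          Fin.val_injective.injOn
    _ ≤ 2 := card_le_two

theorem isHermitian_map_dirLap (m : ℕ) (Δ : ℝ) : ((dirLap m Δ).map Complex.ofReal).IsHermitian := by
  ext i j
  simp only [conjTranspose_apply, map_apply, Complex.star_def, Complex.conj_ofReal, dirLap,
    of_apply, eq_comm, or_comm]

open Finset in
theorem posSemidef_neg_map_dirLap (m : ℕ) (Δ : ℝ) :
    (-(dirLap m Δ).map Complex.ofReal).PosSemidef := by
  refine (isHermitian_map_dirLap m Δ).neg.posSemidef_of_sum_norm_le_re fun k => ?_
  set adj := fun j : Fin m => (k : ℕ) + 1 = j ∨ (j : ℕ) + 1 = k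
  calc ∑ j ∈ univ.erase k, ‖(-(dirLap m Δ).map Complex.ofReal) k j‖
      = ∑ j ∈ univ.erase k, if adj j then 1 / Δ ^ 2 else 0 := by
        refine sum_congr rfl fun j hj => ?_
        simp only [Matrix.neg_apply, map_apply, dirLap, of_apply, if_neg (ne_of_mem_erase hj).symm,
          norm_neg]
        split_ifs <;> simp
    _ ≤ ∑ j, if adj j then 1 / Δ ^ 2 else 0 :=
        sum_le_sum_of_subset_of_nonneg (erase_subset _ _) fun _ _ _ => by positivity
    _ = #{j | adj j} * (1 / Δ ^ 2) := by
        rw [sum_ite, sum_const_zero, add_zero, sum_const, nsmul_eq_mul]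
    _ ≤ 2 * (1 / Δ ^ 2) := by gcongr; exact_mod_cast card_filter_adjacent_le_two k
    _ = RCLike.re ((-(dirLap m Δ).map Complex.ofReal) k k) := by
        simp only [Matrix.neg_apply, map_apply, dirLap, of_apply, ↓reduceIte, RCLike.re_to_complex,
          Complex.neg_re, Complex.ofReal_re]
        ring

theorem posSemidef_neg_map_kronLapD (mx my : ℕ) (Δx Δy : ℝ) :
    (-(kronLapD mx my Δx Δy).map Complex.ofReal).PosSemidef := by
  have h : -(kronLapD mx my Δx Δy).map Complex.ofReal =
      1 ⊗ₖ (-(dirLap mx Δx).map Complex.ofReal) + (-(dirLap my Δy).map Complex.ofReal) ⊗ₖ 1 := by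
    ext p q
    simp only [kronLapD, Matrix.neg_apply, map_apply, Matrix.add_apply, kroneckerMap_apply,
      one_apply]
    split_ifs <;> simp [add_comm]
  rw [h]
  exact (PosSemidef.one.kronecker (posSemidef_neg_map_dirLap mx Δx)).add
    ((posSemidef_neg_map_dirLap my Δy).kronecker PosSemidef.one)

theorem stmt9_general (mx my : ℕ)
    (Δx Δy : ℝ)
    (α β : ℝ) (hα : 0 < α) (hβ : 0 < β)
    (M P N : Matrix (Fin my × Fin mx) (Fin my × Fin mx) ℝ)
    (hM : M = kronLapD mx my Δx Δy)
    (hP : P = β • 1 - α • M)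
    (hNnil : N * N = 0) :
    specRad ((-α) • (P⁻¹ * N)) ≤
      α ^ 2 * specRad M * Real.sqrt (norm1 N * normInf N) /
        (β ^ 2 + α * β * specRad M) :=
  specRad_neg_smul_inv_mul_le (hM ▸ posSemidef_neg_map_kronLapD mx my Δx Δy) hα hβ hP hNnil

theorem stmt9 (mx my : ℕ) (hmx : 1 ≤ mx) (hmy : 1 ≤ my)
    (Δx Δy : ℝ) (hΔx : 0 < Δx) (hΔy : 0 < Δy)
    (α β : ℝ) (hα : 0 < α) (hβ : 0 < β)
    (M P N : Matrix (Fin my × Fin mx) (Fin my × Fin mx) ℝ)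
    (hM : M = kronLapD mx my Δx Δy)
    (hP : P = β • 1 - α • M)
    (hNnil : N * N = 0) :
    specRad ((-α) • (P⁻¹ * N)) ≤
      α ^ 2 * specRad M * Real.sqrt (norm1 N * normInf N) /
        (β ^ 2 + α * β * specRad M) :=
  stmt9_general mx my Δx Δy α β hα hβ M P N hM hP hNnil
end

section
/- Let m_x, m_y ≥ 2, Δx, Δy > 0, let M_N be the Neumann Kronecker-sum Laplacian of sizes (m_x, m_y) and steps (Δx, Δy), and let α > 0 and β > 0 satisfy (α/β)·(1/Δx² + 1/Δy²) < 1. Then the matrix P_N = β·I − α·M_N is invertible and ‖P_N⁻¹‖₂ < 1/(β − α·(1/Δx² + 1/Δy²)). -/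
/-!
Write `P = β I - α M`. For the one-dimensional Neumann matrix one has
`Δ² xᵀ N x = -2 Σ xᵢ² + 2 Σ xᵢ xᵢ₊₁ + x₀ x₁ + x_{m-1} x_{m-2} ≤ |x|² / 2`,
by `2 xᵢ xᵢ₊₁ ≤ xᵢ² + xᵢ₊₁²` and `x₀ x₁ - x₀² ≤ x₁² / 4` at both ends. Summed over the lines of the
grid this gives `xᵀ M x ≤ (s / 2) |x|²` with `s = 1/Δx² + 1/Δy²`, hence `xᵀ P x ≥ c |x|²` with
`c = β - α s / 2 > 0`. By Cauchy–Schwarz `|P x| ≥ c |x|`, so `P` is invertible with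
`‖P⁻¹‖₂ ≤ 1 / c < 1 / (β - α s)`.
-/

open Matrix Kronecker

open Finset

section Coercive

variable {n : Type*} [Fintype n] {A : Matrix n n ℝ} {c : ℝ}

theorem Matrix.mul_norm_le_norm_mulVec_of_coercive
    (hA : ∀ x : n → ℝ, c * (x ⬝ᵥ x) ≤ x ⬝ᵥ (A *ᵥ x)) (x : n → ℝ) :
    c * ‖WithLp.toLp 2 x‖ ≤ ‖WithLp.toLp 2 (A *ᵥ x)‖ := by
  have hsq : x ⬝ᵥ x = ‖WithLp.toLp 2 x‖ ^ 2 := by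
    rw [← real_inner_self_eq_norm_sq, EuclideanSpace.inner_toLp_toLp, star_trivial]
  have hcs : x ⬝ᵥ (A *ᵥ x) ≤ ‖WithLp.toLp 2 x‖ * ‖WithLp.toLp 2 (A *ᵥ x)‖ := by
    rw [dotProduct_comm, ← star_trivial x, ← EuclideanSpace.inner_toLp_toLp, star_trivial]
    exact real_inner_le_norm _ _
  rcases (norm_nonneg (WithLp.toLp 2 x)).eq_or_lt with h0 | hpos
  · rw [← h0, mul_zero]
    exact norm_nonneg _
  · have h := (hA x).trans hcs
    rw [hsq, sq, ← mul_assoc, mul_comm c] at h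
    exact le_of_mul_le_mul_left (by linarith) hpos

variable [DecidableEq n]

theorem Matrix.isUnit_of_coercive (hc : 0 < c)
    (hA : ∀ x : n → ℝ, c * (x ⬝ᵥ x) ≤ x ⬝ᵥ (A *ᵥ x)) : IsUnit A := by
  refine mulVec_injective_iff_isUnit.mp <|
    (injective_iff_map_eq_zero A.mulVecLin).mpr fun x hx => ?_
  have h := mul_norm_le_norm_mulVec_of_coercive hA x
  rw [mulVecLin_apply] at hx
  rw [hx, WithLp.toLp_zero, norm_zero] at h
  have h0 : ‖WithLp.toLp 2 x‖ = 0 :=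
    le_antisymm (nonpos_of_mul_nonpos_right h hc) (norm_nonneg _)
  simpa using h0

theorem Matrix.norm2_inv_le_of_coercive (hc : 0 < c)
    (hA : ∀ x : n → ℝ, c * (x ⬝ᵥ x) ≤ x ⬝ᵥ (A *ᵥ x)) : norm2 A⁻¹ ≤ c⁻¹ := by
  refine ContinuousLinearMap.opNorm_le_bound _ (inv_nonneg.mpr hc.le) fun y => ?_
  obtain ⟨y, rfl⟩ : ∃ x, WithLp.toLp 2 x = y := ⟨y.ofLp, rfl⟩
  have hAA : A *ᵥ (A⁻¹ *ᵥ y) = y := by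
    rw [mulVec_mulVec, mul_nonsing_inv _ ((isUnit_iff_isUnit_det A).mp (isUnit_of_coercive hc hA)),
      one_mulVec]
  have h := mul_norm_le_norm_mulVec_of_coercive hA (A⁻¹ *ᵥ y)
  rw [hAA] at h
  rw [toEuclideanCLM_toLp, inv_mul_eq_div, le_div_iff₀' hc]
  exact h

end Coercive

section KroneckerSum

variable {m n : Type*} [Fintype m] [Fintype n]

theorem Matrix.dotProduct_one_kronecker_mulVec {R : Type*} [CommSemiring R] [DecidableEq m]
    (A : Matrix n n R) (x : m × n → R) :
    x ⬝ᵥ (((1 : Matrix m m R) ⊗ₖ A) *ᵥ x) =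
      ∑ i, (fun j => x (i, j)) ⬝ᵥ (A *ᵥ fun j => x (i, j)) := by
  simp [dotProduct, mulVec, kroneckerMap_apply, one_apply, Fintype.sum_prod_type, mul_sum,
    ite_mul, sum_ite_eq]

theorem Matrix.dotProduct_kronecker_one_mulVec {R : Type*} [CommSemiring R] [DecidableEq n]
    (B : Matrix m m R) (x : m × n → R) :
    x ⬝ᵥ ((B ⊗ₖ (1 : Matrix n n R)) *ᵥ x) =
      ∑ j, (fun i => x (i, j)) ⬝ᵥ (B *ᵥ fun i => x (i, j)) := by
  simp [dotProduct, mulVec, kroneckerMap_apply, one_apply, Fintype.sum_prod_type, mul_sum,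
    ite_mul, mul_ite, sum_ite_eq]
  exact sum_comm

theorem Matrix.dotProduct_kroneckerSum_mulVec_le {R : Type*} [CommRing R] [PartialOrder R]
    [IsOrderedRing R] [DecidableEq m] [DecidableEq n] {A : Matrix n n R} {B : Matrix m m R}
    {a b : R} (hA : ∀ y, y ⬝ᵥ (A *ᵥ y) ≤ a * (y ⬝ᵥ y)) (hB : ∀ y, y ⬝ᵥ (B *ᵥ y) ≤ b * (y ⬝ᵥ y))
    (x : m × n → R) :
    x ⬝ᵥ (((1 : Matrix m m R) ⊗ₖ A + B ⊗ₖ (1 : Matrix n n R)) *ᵥ x) ≤ (a + b) * (x ⬝ᵥ x) := by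
  have hrows : x ⬝ᵥ x = ∑ i, (fun j => x (i, j)) ⬝ᵥ (fun j => x (i, j)) := by
    simp only [dotProduct, Fintype.sum_prod_type]
  have hcols : x ⬝ᵥ x = ∑ j, (fun i => x (i, j)) ⬝ᵥ (fun i => x (i, j)) := by
    simp only [dotProduct, Fintype.sum_prod_type]
    exact sum_comm
  rw [add_mulVec, dotProduct_add, dotProduct_one_kronecker_mulVec,
    dotProduct_kronecker_one_mulVec, add_mul]
  refine add_le_add ?_ ?_
  · rw [hrows, mul_sum]
    exact sum_le_sum fun i _ => hA _
  · rw [hcols, mul_sum]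
    exact sum_le_sum fun j _ => hB _

end KroneckerSum

section Neumann

def neuStencil (n i j : ℕ) : ℝ :=
  (if i = j then -2 else 0) + (if i + 1 = j then 1 else 0) + (if j + 1 = i then 1 else 0) +
    (if i = 0 ∧ j = 1 then 1 else 0) + (if i = n + 1 ∧ j = n then 1 else 0)

theorem neuLap_apply_eq (n : ℕ) (Δ : ℝ) (i j : Fin (n + 2)) :
    neuLap (n + 2) Δ i j = neuStencil n i j / Δ ^ 2 := by
  simp only [neuLap, neuStencil, of_apply, Fin.ext_iff, show n + 2 - 1 = n + 1 by omega,
    Nat.add_sub_cancel]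
  split_ifs <;> first | omega | ring

theorem sum_range_mul_ite_succ_eq (y : ℕ → ℝ) (n : ℕ) :
    ∑ i ∈ range (n + 2), ∑ j ∈ range (n + 2), y i * ((if i + 1 = j then 1 else 0) * y j) =
      ∑ i ∈ range (n + 1), y i * y (i + 1) := by
  rw [sum_range_succ]
  simp only [ite_mul, one_mul, zero_mul, mul_ite, mul_zero, sum_ite_eq, mem_range]
  rw [if_neg (by omega), add_zero]
  exact sum_congr rfl fun i hi => if_pos (by rw [mem_range] at hi; omega)

theorem sum_neuStencil_eq (y : ℕ → ℝ) (n : ℕ) :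
    ∑ i ∈ range (n + 2), ∑ j ∈ range (n + 2), y i * (neuStencil n i j * y j) =
      -2 * ∑ i ∈ range (n + 2), y i ^ 2 + 2 * ∑ i ∈ range (n + 1), y i * y (i + 1) +
        y 0 * y 1 + y (n + 1) * y n := by
  have hdiag : ∑ i ∈ range (n + 2), ∑ j ∈ range (n + 2), y i * ((if i = j then -2 else 0) * y j) =
      -2 * ∑ i ∈ range (n + 2), y i ^ 2 := by
    rw [mul_sum]
    refine sum_congr rfl fun i hi => ?_
    simp only [ite_mul, zero_mul, mul_ite, mul_zero, sum_ite_eq, hi, if_true]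
    ring
  have hleft : ∑ i ∈ range (n + 2), ∑ j ∈ range (n + 2), y i * ((if j + 1 = i then 1 else 0) * y j) =
      ∑ i ∈ range (n + 1), y i * y (i + 1) := by
    rw [sum_comm, ← sum_range_mul_ite_succ_eq]
    exact sum_congr rfl fun i _ => sum_congr rfl fun j _ => by ring
  have hfirst : ∑ i ∈ range (n + 2), ∑ j ∈ range (n + 2),
      y i * ((if i = 0 ∧ j = 1 then 1 else 0) * y j) = y 0 * y 1 := by
    simp [ite_and]
  have hlast : ∑ i ∈ range (n + 2), ∑ j ∈ range (n + 2),
      y i * ((if i = n + 1 ∧ j = n then 1 else 0) * y j) = y (n + 1) * y n := by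
    simp [ite_and]
  simp only [neuStencil, add_mul, mul_add, sum_add_distrib, hdiag, hleft, hfirst, hlast,
    sum_range_mul_ite_succ_eq]
  ring

theorem sum_neuStencil_le (y : ℕ → ℝ) (n : ℕ) :
    ∑ i ∈ range (n + 2), ∑ j ∈ range (n + 2), y i * (neuStencil n i j * y j) ≤
      (∑ i ∈ range (n + 2), y i ^ 2) / 2 := by
  set S := ∑ i ∈ range (n + 2), y i ^ 2
  have hpairs : 2 * ∑ i ∈ range (n + 1), y i * y (i + 1) ≤
      ∑ i ∈ range (n + 1), y i ^ 2 + ∑ i ∈ range (n + 1), y (i + 1) ^ 2 := by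
    rw [mul_sum, ← sum_add_distrib]
    exact sum_le_sum fun i _ => (mul_assoc 2 _ _).symm.trans_le (two_mul_le_add_sq _ _)
  have hS : S = ∑ i ∈ range (n + 1), y i ^ 2 + y (n + 1) ^ 2 := sum_range_succ _ _
  have hS' : S = ∑ i ∈ range (n + 1), y (i + 1) ^ 2 + y 0 ^ 2 := sum_range_succ' _ _
  have hsingle : ∀ k < n + 2, y k ^ 2 ≤ S := fun k hk =>
    single_le_sum (f := fun i => y i ^ 2) (fun i _ => sq_nonneg _) (mem_range.mpr hk)
  rw [sum_neuStencil_eq]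
  nlinarith [hsingle 1 (by omega), hsingle n (by omega), sq_nonneg (y 0 - y 1 / 2),
    sq_nonneg (y (n + 1) - y n / 2)]

theorem dotProduct_neuLap_mulVec_le {m : ℕ} (hm : 2 ≤ m) (Δ : ℝ) (x : Fin m → ℝ) :
    x ⬝ᵥ (neuLap m Δ *ᵥ x) ≤ 1 / (2 * Δ ^ 2) * (x ⬝ᵥ x) := by
  obtain ⟨n, rfl⟩ : ∃ n, m = n + 2 := ⟨m - 2, by omega⟩
  set y : ℕ → ℝ := fun k => if h : k < n + 2 then x ⟨k, h⟩ else 0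
  have hxy : x = fun i : Fin (n + 2) => y i := by ext i; simp [y]
  have hform : x ⬝ᵥ (neuLap (n + 2) Δ *ᵥ x) =
      (∑ i ∈ range (n + 2), ∑ j ∈ range (n + 2), y i * (neuStencil n i j * y j)) / Δ ^ 2 := by
    rw [sum_div, hxy]
    simp only [dotProduct, mulVec, neuLap_apply_eq, mul_sum, sum_range]
    refine sum_congr rfl fun i _ => ?_
    rw [sum_div]
    exact sum_congr rfl fun j _ => by ring
  have hnorm : x ⬝ᵥ x = ∑ i ∈ range (n + 2), y i ^ 2 := by
    rw [hxy, dotProduct, sum_range]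
    simp only [sq]
  rw [hform, hnorm, one_div_mul_eq_div, ← div_div]
  exact div_le_div_of_nonneg_right (sum_neuStencil_le y n) (sq_nonneg Δ)

theorem dotProduct_kronLapN_mulVec_le {mx my : ℕ} (hmx : 2 ≤ mx) (hmy : 2 ≤ my) (Δx Δy : ℝ)
    (x : Fin my × Fin mx → ℝ) :
    x ⬝ᵥ (kronLapN mx my Δx Δy *ᵥ x) ≤ (1 / (2 * Δx ^ 2) + 1 / (2 * Δy ^ 2)) * (x ⬝ᵥ x) :=
  dotProduct_kroneckerSum_mulVec_le (dotProduct_neuLap_mulVec_le hmx Δx)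
    (dotProduct_neuLap_mulVec_le hmy Δy) x

end Neumann

theorem stmt12 (mx my : ℕ) (hmx : 2 ≤ mx) (hmy : 2 ≤ my)
    (Δx Δy : ℝ) (hΔx : 0 < Δx) (hΔy : 0 < Δy)
    (α β : ℝ) (hα : 0 < α) (hβ : 0 < β)
    (hαβ : (α / β) * (1 / Δx ^ 2 + 1 / Δy ^ 2) < 1)
    (MN PN : Matrix (Fin my × Fin mx) (Fin my × Fin mx) ℝ)
    (hMN : MN = kronLapN mx my Δx Δy)
    (hPN : PN = β • 1 - α • MN) :
    IsUnit PN ∧ norm2 PN⁻¹ < 1 / (β - α * (1 / Δx ^ 2 + 1 / Δy ^ 2)) := by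
  set s := 1 / Δx ^ 2 + 1 / Δy ^ 2
  have hs : 0 < s := by positivity
  have hαs : α * s < β := by rwa [div_mul_eq_mul_div, div_lt_one hβ] at hαβ
  have hcoercive : ∀ x, (β - α * s / 2) * (x ⬝ᵥ x) ≤ x ⬝ᵥ (PN *ᵥ x) := by
    intro x
    have hM := dotProduct_kronLapN_mulVec_le hmx hmy Δx Δy x
    rw [← hMN, show 1 / (2 * Δx ^ 2) + 1 / (2 * Δy ^ 2) = s / 2 by ring] at hM
    rw [hPN, sub_mulVec, smul_mulVec, smul_mulVec, one_mulVec, dotProduct_sub,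
      dotProduct_smul, dotProduct_smul, smul_eq_mul, smul_eq_mul]
    linarith [mul_le_mul_of_nonneg_left hM hα.le]
  have hc : 0 < β - α * s / 2 := by linarith
  refine ⟨isUnit_of_coercive hc hcoercive,
    (norm2_inv_le_of_coercive hc hcoercive).trans_lt ?_⟩
  rw [one_div]
  exact inv_strictAnti₀ (by linarith) (by linarith [mul_pos hα hs])
end

section
/- Let m_x, m_y ≥ 2, Δx, Δy > 0, let M_N be the Neumann Kronecker-sum Laplacian of sizes (m_x, m_y) and steps (Δx, Δy), and let α > 0 and β > 0 satisfy (α/β)·(1/Δx² + 1/Δy²) < 1; set P_N = β·I − α·M_N. Let N be a real matrix of the same size with ‖N‖₁ ≤ 4·(1/Δx² + 1/Δy²) and ‖N‖_∞ ≤ 4·(1/Δx² + 1/Δy²). Then the spectral radius of Σ_N = −α·P_N⁻¹·N satisfies ρ(Σ_N) ≤ 4·α·(1/Δx² + 1/Δy²) / (β − α·(1/Δx² + 1/Δy²)). -/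
open Matrix Kronecker

/-!
Use the ∞-operator norm (maximum absolute row sum): it bounds the spectral radius, is
submultiplicative, and is at most `normInf`. Shifted by its constant diagonal, the Neumann
Laplacian `M_N + t • 1`, `t = 2 / Δx² + 2 / Δy²`, has zero diagonal and nonnegative entries with
row sums at most `t`. Writing `P_N = (β + α t) • 1 - α • (M_N + t • 1)` gives `β ‖x‖ ≤ ‖P_N x‖`,
hence `‖P_N⁻¹‖ ≤ 1 / β` and `ρ(Σ_N) ≤ α ‖P_N⁻¹‖ ‖N‖ ≤ 4 α c / β ≤ 4 α c / (β - α c)`, where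
`c = 1 / Δx² + 1 / Δy²`.
-/

attribute [local instance] Matrix.linftyOpSeminormedAddCommGroup Matrix.linftyOpNormedRing
  Matrix.linftyOpNormedAlgebra

namespace Matrix

variable {ι κ ι' κ' : Type*} [Fintype ι] [Fintype κ] [Fintype ι'] [Fintype κ']

theorem linfty_opNorm_le_iff {α : Type*} [SeminormedAddCommGroup α] {A : Matrix ι κ α} {r : ℝ}
    (hr : 0 ≤ r) : ‖A‖ ≤ r ↔ ∀ i, ∑ j, ‖A i j‖ ≤ r := by
  lift r to NNReal using hr
  simp only [← coe_nnnorm, NNReal.coe_le_coe, linfty_opNNNorm_def, Finset.sup_le_iff,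
    Finset.mem_univ, true_implies, ← NNReal.coe_sum]

theorem linfty_opNorm_map_eq {α β : Type*} [SeminormedAddCommGroup α] [SeminormedAddCommGroup β]
    (A : Matrix ι κ α) (f : α → β) (hf : ∀ a, ‖f a‖ = ‖a‖) : ‖A.map f‖ = ‖A‖ := by
  have hf' (a : α) : ‖f a‖₊ = ‖a‖₊ := NNReal.eq (hf a)
  simp only [linfty_opNorm_def, map_apply, hf']

theorem linfty_opNorm_kronecker_le {α : Type*} [NormedRing α] (A : Matrix ι κ α)
    (B : Matrix ι' κ' α) : ‖A ⊗ₖ B‖ ≤ ‖A‖ * ‖B‖ := by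
  refine (linfty_opNorm_le_iff (by positivity)).2 fun ⟨i, i'⟩ => ?_
  calc ∑ j : κ × κ', ‖(A ⊗ₖ B) (i, i') j‖ ≤ ∑ j : κ × κ', ‖A i j.1‖ * ‖B i' j.2‖ :=
        Finset.sum_le_sum fun j _ => norm_mul_le _ _
    _ = (∑ j, ‖A i j‖) * ∑ j', ‖B i' j'‖ := by rw [Fintype.sum_mul_sum, Fintype.sum_prod_type]
    _ ≤ ‖A‖ * ‖B‖ := by
        gcongr
        · exact (linfty_opNorm_le_iff (norm_nonneg A)).1 le_rfl i
        · exact (linfty_opNorm_le_iff (norm_nonneg B)).1 le_rfl i'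

variable {n : Type*} [Fintype n] [DecidableEq n]

theorem linfty_opNorm_one_le {α : Type*} [NormedRing α] [NormOneClass α] :
    ‖(1 : Matrix n n α)‖ ≤ 1 := by
  rw [← diagonal_one, linfty_opNorm_diagonal]
  exact (pi_norm_const_le (1 : α)).trans norm_one.le

theorem linfty_opNorm_le_normInf (A : Matrix n n ℝ) : ‖A‖ ≤ normInf A := by
  have hrow (i : n) : ∑ j, ‖A i j‖ ≤ normInf A :=
    le_ciSup (f := fun i => ∑ j, |A i j|) (Set.finite_range _).bddAbove i
  exact (linfty_opNorm_le_iff (Real.iSup_nonneg fun i => by positivity)).2 hrow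

theorem specRad_le_linfty_opNorm (A : Matrix n n ℝ) : specRad A ≤ ‖A‖ := by
  refine Real.sSup_le ?_ (norm_nonneg A)
  rintro _ ⟨μ, hμ, rfl⟩
  calc ‖μ‖ ≤ ‖A.map Complex.ofReal‖ * ‖(1 : Matrix n n ℂ)‖ := spectrum.norm_le_norm_mul_of_mem hμ
    _ ≤ ‖A.map Complex.ofReal‖ := mul_le_of_le_one_right (norm_nonneg _) linfty_opNorm_one_le
    _ = ‖A‖ := linfty_opNorm_map_eq A _ Complex.norm_real

theorem linfty_opNorm_nonsing_inv_le {𝕜 : Type*} [NontriviallyNormedField 𝕜] [NormedAlgebra ℝ 𝕜]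
    {P : Matrix n n 𝕜} {b : ℝ} (hb : 0 < b) (hP : ∀ x, b * ‖x‖ ≤ ‖P *ᵥ x‖) :
    ‖P⁻¹‖ ≤ b⁻¹ := by
  have hdet : IsUnit P.det := by
    refine isUnit_iff_ne_zero.2 fun h => ?_
    obtain ⟨v, hv, hPv⟩ := exists_mulVec_eq_zero_iff.2 h
    have := hP v
    rw [hPv, norm_zero] at this
    exact hv (norm_le_zero_iff.1 (nonpos_of_mul_nonpos_right this hb))
  rw [linfty_opNorm_eq_opNorm]
  refine ContinuousLinearMap.opNorm_le_bound _ (by positivity) fun y => ?_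
  have := hP (P⁻¹ *ᵥ y)
  rw [mulVec_mulVec, mul_nonsing_inv _ hdet, one_mulVec] at this
  change ‖P⁻¹ *ᵥ y‖ ≤ b⁻¹ * ‖y‖
  rwa [inv_mul_eq_div, le_div_iff₀' hb]

theorem mul_norm_le_norm_smul_one_sub_smul_mulVec {M : Matrix n n ℝ} {α β t : ℝ} (hα : 0 ≤ α)
    (hM : ‖M + t • 1‖ ≤ t) (x : n → ℝ) : β * ‖x‖ ≤ ‖(β • 1 - α • M) *ᵥ x‖ := by
  have hsplit : (β • 1 - α • M) *ᵥ x = (β + α * t) • x - α • ((M + t • 1) *ᵥ x) := by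
    simp only [sub_mulVec, smul_mulVec, one_mulVec, add_mulVec, smul_add, add_smul, mul_smul]
    abel
  have hMx : ‖α • ((M + t • 1) *ᵥ x)‖ ≤ α * t * ‖x‖ := by
    rw [norm_smul, Real.norm_of_nonneg hα, mul_assoc]
    gcongr
    exact (linfty_opNorm_mulVec _ x).trans (by gcongr)
  calc β * ‖x‖ ≤ |β + α * t| * ‖x‖ - α * t * ‖x‖ := by
        nlinarith [le_abs_self (β + α * t), norm_nonneg x]
    _ ≤ ‖(β + α * t) • x‖ - ‖α • ((M + t • 1) *ᵥ x)‖ := by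
        rw [norm_smul, Real.norm_eq_abs]; linarith
    _ ≤ ‖(β • 1 - α • M) *ᵥ x‖ := hsplit ▸ norm_sub_norm_le _ _

end Matrix

theorem Fin.sum_ite_val_eq {M : Type*} [AddCommMonoid M] (m k : ℕ) (c : M) :
    ∑ j : Fin m, (if (j : ℕ) = k then c else 0) = if k < m then c else 0 := by
  simp [Fin.sum_univ_eq_sum_range (fun j => if j = k then c else 0)]

theorem Fin.sum_ite_val_add_one_eq {M : Type*} [AddCommMonoid M] (m k : ℕ) (c : M) :
    ∑ j : Fin m, (if (j : ℕ) + 1 = k then c else 0) = if k ≠ 0 ∧ k ≤ m then c else 0 := by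
  cases k with
  | zero => simp
  | succ k => simp [Fin.sum_ite_val_eq]

theorem neuLap_add_smul_one_apply (m : ℕ) (Δ : ℝ) (i j : Fin m) :
    (neuLap m Δ + (2 / Δ ^ 2) • (1 : Matrix (Fin m) (Fin m) ℝ)) i j =
      ((if (j : ℕ) = i + 1 then (if (i : ℕ) = 0 then 2 else 1) else 0) +
        (if (j : ℕ) + 1 = i then (if (i : ℕ) = m - 1 then 2 else 1) else 0)) / Δ ^ 2 := by
  have hj := j.isLt
  rcases eq_or_ne i j with rfl | hij
  · simp [neuLap, neg_div]
  · simp only [neuLap, Matrix.add_apply, Matrix.of_apply, Matrix.smul_apply,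
      Matrix.one_apply_ne hij, smul_zero, add_zero, if_neg hij]
    split_ifs <;> first | omega | ring

theorem norm_neuLap_add_smul_one_le (m : ℕ) (Δ : ℝ) :
    ‖neuLap m Δ + (2 / Δ ^ 2) • (1 : Matrix (Fin m) (Fin m) ℝ)‖ ≤ 2 / Δ ^ 2 := by
  refine (Matrix.linfty_opNorm_le_iff (by positivity)).2 fun i => ?_
  have hi := i.isLt
  have hw (j : Fin m) : 0 ≤ ((if (j : ℕ) = i + 1 then (if (i : ℕ) = 0 then 2 else 1) else 0) +
      (if (j : ℕ) + 1 = i then (if (i : ℕ) = m - 1 then 2 else 1) else 0) : ℝ) := by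
    positivity
  simp_rw [Real.norm_eq_abs, neuLap_add_smul_one_apply, abs_div, abs_of_nonneg (hw _),
    abs_of_nonneg (sq_nonneg Δ)]
  rw [← Finset.sum_div, Finset.sum_add_distrib, Fin.sum_ite_val_eq, Fin.sum_ite_val_add_one_eq]
  gcongr
  split_ifs <;> first | omega | norm_num

theorem kronLapN_add_smul_one (mx my : ℕ) (Δx Δy : ℝ) :
    kronLapN mx my Δx Δy + (2 / Δx ^ 2 + 2 / Δy ^ 2) • 1 =
      (1 : Matrix (Fin my) (Fin my) ℝ) ⊗ₖ (neuLap mx Δx + (2 / Δx ^ 2) • 1) +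
        (neuLap my Δy + (2 / Δy ^ 2) • 1) ⊗ₖ (1 : Matrix (Fin mx) (Fin mx) ℝ) := by
  simp only [kronLapN, Matrix.kronecker_add, Matrix.add_kronecker, Matrix.kronecker_smul,
    Matrix.smul_kronecker, Matrix.one_kronecker_one, add_smul]
  abel

theorem norm_kronLapN_add_smul_one_le (mx my : ℕ) (Δx Δy : ℝ) :
    ‖kronLapN mx my Δx Δy + (2 / Δx ^ 2 + 2 / Δy ^ 2) • 1‖ ≤ 2 / Δx ^ 2 + 2 / Δy ^ 2 := by
  rw [kronLapN_add_smul_one]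
  refine (norm_add_le _ _).trans (add_le_add ?_ ?_)
  · calc _ ≤ ‖(1 : Matrix (Fin my) (Fin my) ℝ)‖ * ‖neuLap mx Δx + (2 / Δx ^ 2) • 1‖ :=
          Matrix.linfty_opNorm_kronecker_le _ _
      _ ≤ 1 * (2 / Δx ^ 2) := by
          gcongr
          exacts [Matrix.linfty_opNorm_one_le, norm_neuLap_add_smul_one_le mx Δx]
      _ = 2 / Δx ^ 2 := one_mul _
  · calc _ ≤ ‖neuLap my Δy + (2 / Δy ^ 2) • 1‖ * ‖(1 : Matrix (Fin mx) (Fin mx) ℝ)‖ :=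
          Matrix.linfty_opNorm_kronecker_le _ _
      _ ≤ (2 / Δy ^ 2) * 1 := by
          gcongr
          exacts [norm_neuLap_add_smul_one_le my Δy, Matrix.linfty_opNorm_one_le]
      _ = 2 / Δy ^ 2 := mul_one _

theorem stmt13_general (mx my : ℕ) (Δx Δy : ℝ) (α β : ℝ) (hα : 0 < α) (hβ : 0 < β)
    (hαβ : (α / β) * (1 / Δx ^ 2 + 1 / Δy ^ 2) < 1)
    (MN PN N : Matrix (Fin my × Fin mx) (Fin my × Fin mx) ℝ)
    (hMN : MN = kronLapN mx my Δx Δy)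
    (hPN : PN = β • 1 - α • MN)
    (hNinf : normInf N ≤ 4 * (1 / Δx ^ 2 + 1 / Δy ^ 2)) :
    specRad ((-α) • (PN⁻¹ * N)) ≤
      4 * α * (1 / Δx ^ 2 + 1 / Δy ^ 2) / (β - α * (1 / Δx ^ 2 + 1 / Δy ^ 2)) := by
  set c := 1 / Δx ^ 2 + 1 / Δy ^ 2
  have hc : 0 ≤ c := by positivity
  have hgap : α * c < β := by rwa [div_mul_eq_mul_div, div_lt_one hβ] at hαβ
  have hMN' : ‖MN + (2 / Δx ^ 2 + 2 / Δy ^ 2) • 1‖ ≤ 2 / Δx ^ 2 + 2 / Δy ^ 2 :=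
    hMN ▸ norm_kronLapN_add_smul_one_le mx my Δx Δy
  have hPN' : ‖PN⁻¹‖ ≤ β⁻¹ :=
    Matrix.linfty_opNorm_nonsing_inv_le hβ
      (hPN ▸ Matrix.mul_norm_le_norm_smul_one_sub_smul_mulVec hα.le hMN')
  calc specRad ((-α) • (PN⁻¹ * N)) ≤ ‖(-α) • (PN⁻¹ * N)‖ := Matrix.specRad_le_linfty_opNorm _
    _ ≤ α * (‖PN⁻¹‖ * ‖N‖) := by
        rw [norm_smul, norm_neg, Real.norm_of_nonneg hα.le]
        gcongr
        exact norm_mul_le _ _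
    _ ≤ α * (β⁻¹ * (4 * c)) := by
        gcongr
        exact (Matrix.linfty_opNorm_le_normInf N).trans hNinf
    _ = 4 * α * c / β := by ring
    _ ≤ 4 * α * c / (β - α * c) := by
        gcongr
        linarith [mul_nonneg hα.le hc]

theorem stmt13 (mx my : ℕ) (hmx : 2 ≤ mx) (hmy : 2 ≤ my)
    (Δx Δy : ℝ) (hΔx : 0 < Δx) (hΔy : 0 < Δy)
    (α β : ℝ) (hα : 0 < α) (hβ : 0 < β)
    (hαβ : (α / β) * (1 / Δx ^ 2 + 1 / Δy ^ 2) < 1)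
    (MN PN N : Matrix (Fin my × Fin mx) (Fin my × Fin mx) ℝ)
    (hMN : MN = kronLapN mx my Δx Δy)
    (hPN : PN = β • 1 - α • MN)
    (hN1 : norm1 N ≤ 4 * (1 / Δx ^ 2 + 1 / Δy ^ 2))
    (hNinf : normInf N ≤ 4 * (1 / Δx ^ 2 + 1 / Δy ^ 2)) :
    specRad ((-α) • (PN⁻¹ * N)) ≤
      4 * α * (1 / Δx ^ 2 + 1 / Δy ^ 2) / (β - α * (1 / Δx ^ 2 + 1 / Δy ^ 2)) :=
  stmt13_general mx my Δx Δy α β hα hβ hαβ MN PN N hMN hPN hNinf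
end

section
/- Let M_x be an m_x×m_x real matrix and M_y an m_y×m_y real matrix admitting factorizations M_x = Γ_x·Λ_x·Γ_x⁻¹ and M_y = Γ_y·Λ_y·Γ_y⁻¹ with Γ_x, Γ_y invertible and Λ_x, Λ_y diagonal. Let a, b ∈ ℝ be such that a + b·(Λ_x)_{ii} + b·(Λ_y)_{jj} ≠ 0 for all i, j, and let Y be an m_x×m_y real matrix. Define the m_x×m_y matrix Z entrywise by Z_{ij} = (Γ_x⁻¹·Y·(Γ_yᵀ)⁻¹)_{ij} / (a + b·(Λ_x)_{ii} + b·(Λ_y)_{jj}) and set X = Γ_x·Z·Γ_yᵀ. Then X satisfies the Sylvester equation (a·I + b·M_x)·X + b·X·M_yᵀ = Y, and X is the unique solution of this equation. -/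
open Matrix Kronecker

/-! Conjugating by `Γx` on the left and `Γyᵀ` on the right turns the Sylvester operator
`X ↦ (a I + b Mx) X + b X Myᵀ` into the diagonal operator
`Z ↦ ((a + b Λx_ii + b Λy_jj) Z_ij)`, which is inverted entrywise. -/

namespace Matrix

variable {m n K : Type*} [Fintype m] [Fintype n] [DecidableEq m] [DecidableEq n]

theorem diagonal_mul_add_mul_diagonal_apply [CommSemiring K] (d : m → K) (e : n → K)
    (X : Matrix m n K) (i : m) (j : n) :
    (diagonal d * X + X * diagonal e) i j = (d i + e j) * X i j := by
  rw [add_apply, diagonal_mul, mul_diagonal, add_mul, mul_comm (X i j)]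

theorem diagonal_mul_add_mul_diagonal_eq_iff [Field K] {d : m → K} {e : n → K}
    (hde : ∀ i j, d i + e j ≠ 0) (X W : Matrix m n K) :
    diagonal d * X + X * diagonal e = W ↔ X = of fun i j => W i j / (d i + e j) := by
  simp only [← ext_iff, diagonal_mul_add_mul_diagonal_apply, of_apply, eq_div_iff (hde _ _),
    mul_comm (X _ _)]

variable [CommRing K] {P : Matrix m m K} {Q : Matrix n n K}

theorem eq_mul_mul_iff_nonsing_inv_mul_mul_eq (hP : IsUnit P.det) (hQ : IsUnit Q.det)
    (X Z : Matrix m n K) : X = P * Z * Q ↔ P⁻¹ * X * Q⁻¹ = Z := by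
  constructor
  · rintro rfl
    simp only [Matrix.mul_assoc, mul_nonsing_inv Q hQ, Matrix.mul_one,
      nonsing_inv_mul_cancel_left _ _ hP]
  · rintro rfl
    simp only [Matrix.mul_assoc, nonsing_inv_mul Q hQ, Matrix.mul_one,
      mul_nonsing_inv_cancel_left _ _ hP]

theorem mul_add_mul_eq_iff_of_conj (hP : IsUnit P.det) (hQ : IsUnit Q.det)
    {A A' : Matrix m m K} {B B' : Matrix n n K}
    (hA : A = P * A' * P⁻¹) (hB : B = Q⁻¹ * B' * Q) (X Y : Matrix m n K) :
    A * X + X * B = Y ↔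
      A' * (P⁻¹ * X * Q⁻¹) + P⁻¹ * X * Q⁻¹ * B' = P⁻¹ * Y * Q⁻¹ := by
  obtain ⟨X, rfl⟩ : ∃ Z, X = P * Z * Q :=
    ⟨_, (eq_mul_mul_iff_nonsing_inv_mul_mul_eq hP hQ X _).2 rfl⟩
  have hconj : A * (P * X * Q) + P * X * Q * B = P * (A' * X + X * B') * Q := by
    simp only [hA, hB, Matrix.mul_assoc, nonsing_inv_mul_cancel_left _ _ hP,
      mul_nonsing_inv_cancel_left _ _ hQ, Matrix.mul_add, Matrix.add_mul]
  rw [hconj, eq_comm, eq_mul_mul_iff_nonsing_inv_mul_mul_eq hP hQ, eq_comm,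
    (eq_mul_mul_iff_nonsing_inv_mul_mul_eq hP hQ _ X).1 rfl]

end Matrix

theorem stmt19 {mx my : ℕ}
    (Mx Γx Λx : Matrix (Fin mx) (Fin mx) ℝ)
    (My Γy Λy : Matrix (Fin my) (Fin my) ℝ)
    (hΓx : IsUnit Γx) (hΛx : Λx.IsDiag) (hMx : Mx = Γx * Λx * Γx⁻¹)
    (hΓy : IsUnit Γy) (hΛy : Λy.IsDiag) (hMy : My = Γy * Λy * Γy⁻¹)
    (a b : ℝ) (hnz : ∀ i j, a + b * Λx i i + b * Λy j j ≠ 0)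
    (Y Z X : Matrix (Fin mx) (Fin my) ℝ)
    (hZ : Z = Matrix.of fun i j =>
      (Γx⁻¹ * Y * (Γyᵀ)⁻¹) i j / (a + b * Λx i i + b * Λy j j))
    (hX : X = Γx * Z * Γyᵀ) :
    (a • 1 + b • Mx) * X + b • (X * Myᵀ) = Y ∧
      ∀ X' : Matrix (Fin mx) (Fin my) ℝ,
        (a • 1 + b • Mx) * X' + b • (X' * Myᵀ) = Y → X' = X := by
  obtain ⟨dx, rfl⟩ : ∃ d, Λx = diagonal d := ⟨_, hΛx.diagonal_diag.symm⟩
  obtain ⟨dy, rfl⟩ : ∃ d, Λy = diagonal d := ⟨_, hΛy.diagonal_diag.symm⟩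
  simp only [diagonal_apply_eq] at hnz hZ
  have hdx : IsUnit Γx.det := (isUnit_iff_isUnit_det Γx).mp hΓx
  have hdy : IsUnit Γyᵀ.det := by rwa [det_transpose, ← isUnit_iff_isUnit_det]
  have hA : a • 1 + b • Mx = Γx * diagonal (fun i => a + b * dx i) * Γx⁻¹ := by
    have hdiag : diagonal (fun i => a + b * dx i) = a • 1 + b • diagonal dx := by
      rw [smul_one_eq_diagonal, ← diagonal_smul, ← diagonal_add]
      rfl
    rw [hMx, hdiag, Matrix.mul_add, Matrix.add_mul, Matrix.mul_smul, Matrix.mul_smul,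
      Matrix.smul_mul, Matrix.smul_mul, Matrix.mul_one, mul_nonsing_inv _ hdx]
  have hB : b • Myᵀ = (Γyᵀ)⁻¹ * diagonal (fun j => b * dy j) * Γyᵀ := by
    rw [hMy, transpose_mul, transpose_mul, diagonal_transpose, transpose_nonsing_inv,
      show diagonal (fun j => b * dy j) = b • diagonal dy from diagonal_smul b dy,
      Matrix.mul_smul, Matrix.smul_mul, Matrix.mul_assoc]
  have hsolve (X' : Matrix (Fin mx) (Fin my) ℝ) :
      (a • 1 + b • Mx) * X' + b • (X' * Myᵀ) = Y ↔ X' = X := by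
    rw [← Matrix.mul_smul, mul_add_mul_eq_iff_of_conj hdx hdy hA hB,
      diagonal_mul_add_mul_diagonal_eq_iff hnz, hX,
      eq_mul_mul_iff_nonsing_inv_mul_mul_eq hdx hdy, hZ]
  exact ⟨(hsolve X).2 rfl, fun X' => (hsolve X').1⟩
end
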